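/- Let V be an N_K=N SUSY vertex algebra and M a V-module, with Li filtration E_n(M). Then: (1) E_n(M) ⊇ E_{n+1}(M) for every n ∈ ℤ; (2) E_n(M) = M for every n ≤ 0; (3) a_{(−1−k|K)} E_n(M) ⊆ E_{n+k}(M) for every a ∈ V, k ∈ ℕ, K ⊂ [N] and n ∈ ℤ; (4) for n ≥ 1, E_n(M) equals the span of the elements a_{(−1−k|K)} m with a ∈ V, k ≥ 1, K ⊂ [N] and m ∈ E_{n−k}(M); (5) for n ≥ 1, E_n(M) equals the span of the elements a^1_{(−1−k_1|K_1)} ⋯ a^r_{(−1−k_r|K_r)} m with r ≥ 1, a^i ∈ V, m ∈ M, k_i ≥ 1, K_i ⊂ [N] and k_1+⋯+k_r ≥ n. -/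
import Mathlib


open Finset
open scoped DirectSum

namespace SUSY

/-- The sign `(-1)^x` attached to a parity `x : ZMod 2`. -/
def sg (x : ZMod 2) : ℤ := if x = 0 then 1 else -1

/-- The reordering sign `σ(I,J)` (equal to `0` when `I` and `J` are not disjoint). -/
def ssgn {N : ℕ} (I J : Finset (Fin N)) : ℤ :=
  if Disjoint I J then (-1) ^ (((I ×ˢ J).filter fun p => p.2 < p.1).card) else 0

/-- The generalized binomial coefficient `x(x-1)⋯(x-j+1)/j!` in a field `𝕜`. -/
noncomputable def dchoose (𝕜 : Type) [Field 𝕜] (x : ℤ) (j : ℕ) : 𝕜 :=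
  (∏ i ∈ Finset.range j, ((x : 𝕜) - (i : 𝕜))) / (j.factorial : 𝕜)

/-- Ordered product `S^{l₁} ∘ ⋯ ∘ S^{l_r}` over an ordered subset `L = {l₁ < ⋯ < l_r}`. -/
def sProd {𝕜 : Type} [Field 𝕜] {V : Type} [AddCommGroup V] [Module 𝕜 V] {N : ℕ}
    (S : Fin N → Module.End 𝕜 V) (L : Finset (Fin N)) : Module.End 𝕜 V :=
  ((L.sort (· ≤ ·)).map S).prod

section Gr

variable {𝕜 : Type} [Field 𝕜] {V : Type} [AddCommGroup V] [Module 𝕜 V]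

/-- For a filtration `E`, the quotient `E n / E (n+1)`. -/
abbrev grQuot (E : ℤ → Submodule 𝕜 V) (n : ℕ) : Type :=
  ↥(E (n : ℤ)) ⧸ Submodule.comap (E (n : ℤ)).subtype (E ((n : ℤ) + 1))

/-- The associated graded space `⨁ₙ E n / E (n+1)` of a filtration `E`. -/
abbrev GrLi (E : ℤ → Submodule 𝕜 V) : Type := ⨁ n : ℕ, grQuot E n

/-- The class of an element `a ∈ E n` in the degree `n` component `E n / E (n+1)`
of the associated graded space. -/
noncomputable def grCls (E : ℤ → Submodule 𝕜 V) (n : ℕ) (a : V) (h : a ∈ E (n : ℤ)) :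
    GrLi E :=
  DirectSum.of (fun m : ℕ => grQuot E m) n (Submodule.Quotient.mk ⟨a, h⟩)

end Gr

/-- A supercommutative superalgebra structure on a (possibly noncommutative) ring `A`. -/
structure SuperRing (𝕜 : Type) [CommRing 𝕜] (A : Type) [Ring A] [Algebra 𝕜 A] : Type where
  gr : ZMod 2 → Submodule 𝕜 A
  decomp : DirectSum.Decomposition gr
  one_mem : (1 : A) ∈ gr 0
  mul_mem : ∀ (p q : ZMod 2) (x y : A), x ∈ gr p → y ∈ gr q → x * y ∈ gr (p + q)
  scomm : ∀ (p q : ZMod 2) (x y : A), x ∈ gr p → y ∈ gr q → x * y = sg (p * q) • (y * x)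

/-- An even derivation of a superalgebra. -/
structure EvenDer (𝕜 : Type) [CommRing 𝕜] (A : Type) [Ring A] [Algebra 𝕜 A]
    (SA : SuperRing 𝕜 A) : Type where
  D : A →ₗ[𝕜] A
  even : ∀ (p : ZMod 2), ∀ x ∈ SA.gr p, D x ∈ SA.gr p
  leibniz : ∀ x y : A, D (x * y) = D x * y + x * D y

/-- An odd derivation of a superalgebra. -/
structure OddDer (𝕜 : Type) [CommRing 𝕜] (A : Type) [Ring A] [Algebra 𝕜 A]
    (SA : SuperRing 𝕜 A) : Type where
  D : A →ₗ[𝕜] A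
  odd : ∀ (p : ZMod 2), ∀ x ∈ SA.gr p, D x ∈ SA.gr (p + 1)
  leibniz : ∀ (p : ZMod 2) (x y : A), x ∈ SA.gr p →
    D (x * y) = D x * y + sg p • (x * D y)

/-- The structure of a Poisson superalgebra of parity `qpar` on a `𝕜`-module `Q`:
a unital supercommutative multiplication together with a Poisson bracket of parity
`qpar` satisfying super skew-symmetry, the (parity-shifted) Jacobi identity and
the Leibniz rule. -/
structure PoissonSuperAlgStruct (𝕜 : Type) [Field 𝕜] (Q : Type) [AddCommGroup Q]
    [Module 𝕜 Q] (qpar : ZMod 2) : Type where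
  gr : ZMod 2 → Submodule 𝕜 Q
  decomp : DirectSum.Decomposition gr
  mul : Q →ₗ[𝕜] Q →ₗ[𝕜] Q
  one : Q
  br : Q →ₗ[𝕜] Q →ₗ[𝕜] Q
  one_even : one ∈ gr 0
  mul_mem : ∀ (p q : ZMod 2) (x y : Q), x ∈ gr p → y ∈ gr q → mul x y ∈ gr (p + q)
  br_mem : ∀ (p q : ZMod 2) (x y : Q), x ∈ gr p → y ∈ gr q → br x y ∈ gr (p + q + qpar)
  mul_assoc' : ∀ x y z : Q, mul (mul x y) z = mul x (mul y z)
  mul_scomm : ∀ (p q : ZMod 2) (x y : Q), x ∈ gr p → y ∈ gr q →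
    mul x y = sg (p * q) • mul y x
  one_mul' : ∀ x : Q, mul one x = x
  br_skew : ∀ (p q : ZMod 2) (x y : Q), x ∈ gr p → y ∈ gr q →
    br x y = (-sg (p * q + qpar)) • br y x
  br_jacobi : ∀ (p q r : ZMod 2) (x y z : Q), x ∈ gr p → y ∈ gr q → z ∈ gr r →
    br x (br y z)
      = (-sg (p * qpar + qpar)) • br (br x y) z
        + sg ((p + qpar) * (q + qpar)) • br y (br x z)
  leibniz : ∀ (p q : ZMod 2) (x y z : Q), x ∈ gr p → y ∈ gr q →
    br x (mul y z) = mul (br x y) z + sg ((p + qpar) * q) • mul y (br x z)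
section Structures
variable (𝕜 : Type) [Field 𝕜] [CharZero 𝕜] (N : ℕ)
variable (V : Type) [AddCommGroup V] [Module 𝕜 V]

/-- An `N_W = N` SUSY vertex algebra, described through the Fourier modes
`a_(j|J)` of the state-superfield correspondence
`Y(a,Z) = ∑ Z^(-1-j | [N]∖J) a_(j|J)`. -/
structure NWSusyVA : Type where
  gr : ZMod 2 → Submodule 𝕜 V
  decomp : DirectSum.Decomposition gr
  vac : V
  T : Module.End 𝕜 V
  S : Fin N → Module.End 𝕜 V
  mode : V →ₗ[𝕜] ℤ → Finset (Fin N) → Module.End 𝕜 V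
  mode_trunc : ∀ (a v : V), ∃ n : ℕ, ∀ j : ℤ, (n : ℤ) ≤ j → ∀ J, mode a j J v = 0
  vac_even : vac ∈ gr 0
  T_even : ∀ (p : ZMod 2), ∀ x ∈ gr p, T x ∈ gr p
  S_odd : ∀ (i : Fin N) (p : ZMod 2), ∀ x ∈ gr p, S i x ∈ gr (p + 1)
  mode_parity : ∀ (pa pv : ZMod 2) (a v : V) (j : ℤ) (J : Finset (Fin N)),
    a ∈ gr pa → v ∈ gr pv →
    mode a j J v ∈ gr (pa + pv + (N : ZMod 2) + (J.card : ZMod 2))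
  mode_vac : ∀ a : V, mode a (-1) Finset.univ vac = a
  mode_vac_nonneg : ∀ (a : V) (j : ℤ), 0 ≤ j → ∀ J, mode a j J vac = 0
  T_vac : T vac = 0
  S_vac : ∀ i, S i vac = 0
  T_transl : ∀ (a : V) (j : ℤ) (J : Finset (Fin N)),
    T * mode a j J - mode a j J * T = (-j) • mode a (j - 1) J
  S_transl : ∀ (i : Fin N) (pa : ZMod 2) (a : V), a ∈ gr pa →
    ∀ (j : ℤ) (J : Finset (Fin N)),
    S i * mode a j J
        - sg (pa + (N : ZMod 2) + (J.card : ZMod 2)) • (mode a j J * S i)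
      = ssgn (Finset.univ \ J) {i} • mode a j (J.erase i)
  locality : ∀ (pa pb : ZMod 2) (a b : V), a ∈ gr pa → b ∈ gr pb →
    ∃ n : ℕ, ∀ (p q : ℤ) (J K : Finset (Fin N)),
      (∑ i ∈ Finset.range (n + 1),
        ((-1 : ℤ) ^ i * (n.choose i : ℤ)) •
          (mode a (p + ((n - i : ℕ) : ℤ)) J * mode b (q + (i : ℤ)) K
            - sg ((pa + (N : ZMod 2) + (J.card : ZMod 2)) *
                  (pb + (N : ZMod 2) + (K.card : ZMod 2))) •
              (mode b (q + (i : ℤ)) K * mode a (p + ((n - i : ℕ) : ℤ)) J))) = 0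

/-- An `N_K = N` SUSY vertex algebra, described through the Fourier modes
`a_(j|J)` of the state-superfield correspondence. -/
structure NKSusyVA : Type where
  gr : ZMod 2 → Submodule 𝕜 V
  decomp : DirectSum.Decomposition gr
  vac : V
  SK : Fin N → Module.End 𝕜 V
  mode : V →ₗ[𝕜] ℤ → Finset (Fin N) → Module.End 𝕜 V
  mode_trunc : ∀ (a v : V), ∃ n : ℕ, ∀ j : ℤ, (n : ℤ) ≤ j → ∀ J, mode a j J v = 0
  vac_even : vac ∈ gr 0
  SK_odd : ∀ (i : Fin N) (p : ZMod 2), ∀ x ∈ gr p, SK i x ∈ gr (p + 1)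
  mode_parity : ∀ (pa pv : ZMod 2) (a v : V) (j : ℤ) (J : Finset (Fin N)),
    a ∈ gr pa → v ∈ gr pv →
    mode a j J v ∈ gr (pa + pv + (N : ZMod 2) + (J.card : ZMod 2))
  mode_vac : ∀ a : V, mode a (-1) Finset.univ vac = a
  mode_vac_nonneg : ∀ (a : V) (j : ℤ), 0 ≤ j → ∀ J, mode a j J vac = 0
  SK_vac : ∀ i, SK i vac = 0
  SK_transl : ∀ (i : Fin N) (pa : ZMod 2) (a : V), a ∈ gr pa →
    ∀ (j : ℤ) (J : Finset (Fin N)),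
    SK i * mode a j J
        - sg (pa + (N : ZMod 2) + (J.card : ZMod 2)) • (mode a j J * SK i)
      = if i ∈ J then ssgn (Finset.univ \ J) {i} • mode a j (J.erase i)
        else (-j * ssgn (Finset.univ \ insert i J) {i}) • mode a (j - 1) (insert i J)
  locality : ∀ (pa pb : ZMod 2) (a b : V), a ∈ gr pa → b ∈ gr pb →
    ∃ n : ℕ, ∀ (p q : ℤ) (J K : Finset (Fin N)),
      (∑ i ∈ Finset.range (n + 1),
        ((-1 : ℤ) ^ i * (n.choose i : ℤ)) •
          (mode a (p + ((n - i : ℕ) : ℤ)) J * mode b (q + (i : ℤ)) K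
            - sg ((pa + (N : ZMod 2) + (J.card : ZMod 2)) *
                  (pb + (N : ZMod 2) + (K.card : ZMod 2))) •
              (mode b (q + (i : ℤ)) K * mode a (p + ((n - i : ℕ) : ℤ)) J))) = 0

variable (M : Type) [AddCommGroup M] [Module 𝕜 M]

/-- A module over an `N_W = N` SUSY vertex algebra, given by the Fourier modes of
the superfields `Y^M(a,Z)`, satisfying the standard module axioms (vacuum acting as
the identity, translation invariance, and the Borcherds-type identities, i.e. the
SUSY commutator formula and the SUSY iterate formula hold for the action on `M`). -/
structure NWModule (W : NWSusyVA 𝕜 N V) : Type where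
  grM : ZMod 2 → Submodule 𝕜 M
  decompM : DirectSum.Decomposition grM
  amode : V →ₗ[𝕜] ℤ → Finset (Fin N) → Module.End 𝕜 M
  amode_trunc : ∀ (a : V) (m : M), ∃ n : ℕ, ∀ j : ℤ, (n : ℤ) ≤ j → ∀ J, amode a j J m = 0
  amode_parity : ∀ (pa pm : ZMod 2) (a : V) (m : M) (j : ℤ) (J : Finset (Fin N)),
    a ∈ W.gr pa → m ∈ grM pm →
    amode a j J m ∈ grM (pa + pm + (N : ZMod 2) + (J.card : ZMod 2))
  vac_act : ∀ (j : ℤ) (J : Finset (Fin N)),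
    amode W.vac j J = if j = -1 ∧ J = Finset.univ then 1 else 0
  T_act : ∀ (a : V) (j : ℤ) (J : Finset (Fin N)),
    amode (W.T a) j J = (-j) • amode a (j - 1) J
  S_act : ∀ (i : Fin N) (a : V) (j : ℤ) (J : Finset (Fin N)),
    amode (W.S i a) j J = ssgn {i} (Finset.univ \ J) • amode a j (J.erase i)
  comm_formula : ∀ (pa pb : ZMod 2) (a b : V), a ∈ W.gr pa → b ∈ W.gr pb →
    ∀ (l m : ℤ) (L M' : Finset (Fin N)) (u : M),
    amode a l L (amode b m M' u)
        - sg ((pa + (N : ZMod 2) + (L.card : ZMod 2)) *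
              (pb + (N : ZMod 2) + (M'.card : ZMod 2))) •
            amode b m M' (amode a l L u)
      = ∑ᶠ j : ℕ, ∑ J : Finset (Fin N),
          if L ∩ M' ⊆ J then
            (((sg ((pa + (N : ZMod 2) + (L.card : ZMod 2)) *
                     ((N : ZMod 2) + (M'.card : ZMod 2))
                   + ((L.card : ZMod 2) + (J.card : ZMod 2)) *
                     ((N : ZMod 2) + (J.card : ZMod 2)))
                * (ssgn J (Finset.univ \ J) * ssgn L (Finset.univ \ L) * ssgn J (L \ J)
                    * ssgn (L \ J) ((Finset.univ \ M') \ (L \ J))) : ℤ) : 𝕜)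
              * dchoose 𝕜 l j) •
            amode (W.mode a (j : ℤ) J b) (l + m - (j : ℤ)) (M' ∪ (L \ J)) u
          else 0
  iterate_formula : ∀ (pa pb : ZMod 2) (a b : V), a ∈ W.gr pa → b ∈ W.gr pb →
    ∀ (k l : ℤ) (K L : Finset (Fin N)) (u : M),
    amode (W.mode a k K b) l L u
      = ∑ᶠ j : ℕ, ∑ J ∈ K.powerset,
          (((sg ((j : ZMod 2)
                 + ((K \ J).card : ZMod 2) * (1 + ((Finset.univ \ J).card : ZMod 2)))
              * (ssgn J (K \ J) * ssgn J (Finset.univ \ J) * ssgn L (K \ J)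
                  * ssgn (L ∪ (K \ J)) (Finset.univ \ (L ∪ (K \ J)))) : ℤ) : 𝕜)
            * dchoose 𝕜 k j) •
          (sg ((pa + (N : ZMod 2) + (J.card : ZMod 2)) *
                ((Finset.univ \ (L ∪ (K \ J))).card : ZMod 2)) •
              amode a (k - (j : ℤ)) J (amode b (l + (j : ℤ)) (L ∪ (K \ J)) u)
            - sg ((k : ZMod 2) + pa * pb
                  + (pb + (N : ZMod 2) + (J.card : ZMod 2)) *
                    ((Finset.univ \ (L ∪ (K \ J))).card : ZMod 2)) •
              amode b (k + l - (j : ℤ)) (L ∪ (K \ J)) (amode a (j : ℤ) J u))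

/-- A module over an `N_K = N` SUSY vertex algebra. -/
structure NKModule (W : NKSusyVA 𝕜 N V) : Type where
  grM : ZMod 2 → Submodule 𝕜 M
  decompM : DirectSum.Decomposition grM
  amode : V →ₗ[𝕜] ℤ → Finset (Fin N) → Module.End 𝕜 M
  amode_trunc : ∀ (a : V) (m : M), ∃ n : ℕ, ∀ j : ℤ, (n : ℤ) ≤ j → ∀ J, amode a j J m = 0
  amode_parity : ∀ (pa pm : ZMod 2) (a : V) (m : M) (j : ℤ) (J : Finset (Fin N)),
    a ∈ W.gr pa → m ∈ grM pm →
    amode a j J m ∈ grM (pa + pm + (N : ZMod 2) + (J.card : ZMod 2))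
  vac_act : ∀ (j : ℤ) (J : Finset (Fin N)),
    amode W.vac j J = if j = -1 ∧ J = Finset.univ then 1 else 0
  SK_act : ∀ (i : Fin N) (a : V) (j : ℤ) (J : Finset (Fin N)),
    amode (W.SK i a) j J
      = if i ∈ J then ssgn (Finset.univ \ J) {i} • amode a j (J.erase i)
        else (-j * ssgn (Finset.univ \ insert i J) {i}) • amode a (j - 1) (insert i J)
  comm_formula : ∀ (pa pb : ZMod 2) (a b : V), a ∈ W.gr pa → b ∈ W.gr pb →
    ∀ (l m : ℤ) (L M' : Finset (Fin N)) (u : M),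
    amode a l L (amode b m M' u)
        - sg ((pa + (N : ZMod 2) + (L.card : ZMod 2)) *
              (pb + (N : ZMod 2) + (M'.card : ZMod 2))) •
            amode b m M' (amode a l L u)
      = ∑ᶠ j : ℕ, ∑ J : Finset (Fin N),
          if M' ∩ ((J \ L) ∪ (L \ J)) = ∅ then
            (((sg ((pa + (N : ZMod 2) + (L.card : ZMod 2)) *
                     ((N : ZMod 2) + (M'.card : ZMod 2))
                   + (J.card : ZMod 2) * ((N : ZMod 2) + (L.card : ZMod 2))
                   + (L.card : ZMod 2) * (N : ZMod 2)
                   + (((J ∩ L).card.choose 2 : ℕ) : ZMod 2)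
                   + (((J.card + 1).choose 2 : ℕ) : ZMod 2))
                * (ssgn ((J \ L) ∪ (L \ J))
                      (Finset.univ \ (M' ∪ (J \ L) ∪ (L \ J)))
                    * ssgn J (Finset.univ \ J) * ssgn L (Finset.univ \ L)
                    * ssgn (J \ L) (J ∩ L) * ssgn (J ∩ L) (L \ J)
                    * ssgn (J \ L) (L \ J)) : ℤ) : 𝕜)
              * ((∏ i ∈ Finset.range (j + (J \ L).card), ((l : 𝕜) - (i : 𝕜)))
                  / (j.factorial : 𝕜))) •
            amode (W.mode a (j : ℤ) J b)
              (l + m - (j : ℤ) - ((J \ L).card : ℤ)) (M' ∪ (J \ L) ∪ (L \ J)) u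
          else 0
  iterate_formula : ∀ (pa pb : ZMod 2) (a b : V), a ∈ W.gr pa → b ∈ W.gr pb →
    ∀ (k l : ℤ) (K L : Finset (Fin N)) (w : M),
    amode (W.mode a k K b) l L w
      = ∑ᶠ j : ℕ, ∑ J : Finset (Fin N), ∑ M' ∈ (J ∩ K).powerset,
          (((sg ((j : ZMod 2)
                 + ((((J \ M').card + 1).choose 2 : ℕ) : ZMod 2)
                 + ((J \ M').card : ZMod 2) *
                     ((M'.card : ZMod 2) + ((Finset.univ \ J).card : ZMod 2))
                 + ((K \ M').card : ZMod 2) * (1 + ((Finset.univ \ J).card : ZMod 2))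
                 + ((Finset.univ \ J).card : ZMod 2) *
                     ((Finset.univ \ (L ∪ (J \ M') ∪ (K \ M'))).card : ZMod 2))
              * (ssgn M' (K \ M') * ssgn (J \ M') M' * ssgn J (Finset.univ \ J)
                  * ssgn (J \ M') (K \ M') * ssgn L ((J \ M') ∪ (K \ M'))
                  * ssgn (L ∪ (J \ M') ∪ (K \ M'))
                      (Finset.univ \ (L ∪ (J \ M') ∪ (K \ M')))) : ℤ) : 𝕜)
            * dchoose 𝕜 k j * dchoose 𝕜 (k - (j : ℤ)) ((J \ M').card)) •
          (sg ((pa + (N : ZMod 2) + (J.card : ZMod 2)) *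
                ((Finset.univ \ (L ∪ (J \ M') ∪ (K \ M'))).card : ZMod 2)) •
              amode a (k - (j : ℤ) - ((J \ M').card : ℤ)) J
                (amode b (l + (j : ℤ)) (L ∪ (J \ M') ∪ (K \ M')) w)
            - sg ((k : ZMod 2) + pa * pb
                  + (pb + (N : ZMod 2) + (J.card : ZMod 2)) *
                    ((Finset.univ \ (L ∪ (J \ M') ∪ (K \ M'))).card : ZMod 2)) •
              amode b (l + k - (j : ℤ) - ((J \ M').card : ℤ))
                (L ∪ (J \ M') ∪ (K \ M')) (amode a (j : ℤ) J w))

end Structures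
section Defs

variable {𝕜 : Type} [Field 𝕜] [CharZero 𝕜] {N : ℕ}
variable {V : Type} [AddCommGroup V] [Module 𝕜 V]

/-- Commutativity of a SUSY vertex algebra: all superfields supercommute, i.e.
`[Y(a,Z), Y(b,W)] = 0` for `a`, `b` of pure parity. -/
def NWSusyVA.IsCommutative (W : NWSusyVA 𝕜 N V) : Prop :=
  ∀ (pa pb : ZMod 2) (a b : V), a ∈ W.gr pa → b ∈ W.gr pb →
    ∀ (j m : ℤ) (J M : Finset (Fin N)),
      W.mode a j J * W.mode b m M
        = sg ((pa + (N : ZMod 2) + (J.card : ZMod 2)) *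
              (pb + (N : ZMod 2) + (M.card : ZMod 2))) •
            (W.mode b m M * W.mode a j J)

/-- Commutativity of an `N_K = N` SUSY vertex algebra. -/
def NKSusyVA.IsCommutative (W : NKSusyVA 𝕜 N V) : Prop :=
  ∀ (pa pb : ZMod 2) (a b : V), a ∈ W.gr pa → b ∈ W.gr pb →
    ∀ (j m : ℤ) (J M : Finset (Fin N)),
      W.mode a j J * W.mode b m M
        = sg ((pa + (N : ZMod 2) + (J.card : ZMod 2)) *
              (pb + (N : ZMod 2) + (M.card : ZMod 2))) •
            (W.mode b m M * W.mode a j J)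

/-- The normally ordered product `a ⋅ b := a_(-1|[N]) b`. -/
def NWSusyVA.prod (W : NWSusyVA 𝕜 N V) (a b : V) : V := W.mode a (-1) Finset.univ b

/-- The normally ordered product `a ⋅ b := a_(-1|[N]) b`. -/
def NKSusyVA.prod (W : NKSusyVA 𝕜 N V) (a b : V) : V := W.mode a (-1) Finset.univ b

/-- The Li filtration of an `N_W = N` SUSY vertex algebra:
`E n` is spanned by the elements `a¹_(-1-k₁|K₁) ⋯ a^r_(-1-k_r|K_r) b`
with `r ≥ 1` and `k₁ + ⋯ + k_r ≥ n`. -/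
def NWSusyVA.liFil (W : NWSusyVA 𝕜 N V) (n : ℤ) : Submodule 𝕜 V :=
  Submodule.span 𝕜 {x : V | ∃ (r : ℕ) (a : Fin (r + 1) → V) (k : Fin (r + 1) → ℕ)
      (K : Fin (r + 1) → Finset (Fin N)) (b : V),
      n ≤ ∑ i, (k i : ℤ) ∧
      x = ((List.ofFn fun i => W.mode (a i) (-1 - (k i : ℤ)) (K i)).prod) b}

/-- The Li filtration of an `N_K = N` SUSY vertex algebra. -/
def NKSusyVA.liFil (W : NKSusyVA 𝕜 N V) (n : ℤ) : Submodule 𝕜 V :=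
  Submodule.span 𝕜 {x : V | ∃ (r : ℕ) (a : Fin (r + 1) → V) (k : Fin (r + 1) → ℕ)
      (K : Fin (r + 1) → Finset (Fin N)) (b : V),
      n ≤ ∑ i, (k i : ℤ) ∧
      x = ((List.ofFn fun i => W.mode (a i) (-1 - (k i : ℤ)) (K i)).prod) b}

/-- The subspace `C₂(V) = span{ a_(-j|J) b : j ≥ 2 }`. -/
def NWSusyVA.C2sub (W : NWSusyVA 𝕜 N V) : Submodule 𝕜 V :=
  Submodule.span 𝕜 {x : V | ∃ (a b : V) (j : ℕ) (J : Finset (Fin N)),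
    2 ≤ j ∧ x = W.mode a (-(j : ℤ)) J b}

/-- The subspace `C₂(V) = span{ a_(-j|J) b : j ≥ 2 }`. -/
def NKSusyVA.C2sub (W : NKSusyVA 𝕜 N V) : Submodule 𝕜 V :=
  Submodule.span 𝕜 {x : V | ∃ (a b : V) (j : ℕ) (J : Finset (Fin N)),
    2 ≤ j ∧ x = W.mode a (-(j : ℤ)) J b}

/-- The set of states generated from a set `G` of strong generators. -/
def NWSusyVA.genSet (W : NWSusyVA 𝕜 N V) (G : Finset V) : Set V :=
  {x : V | ∃ (r : ℕ) (a : Fin r → V) (p : Fin r → ℕ) (P : Fin r → Finset (Fin N)),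
    (∀ i, a i ∈ G ∧ 1 ≤ p i) ∧
    x = ((List.ofFn fun i => W.mode (a i) (-(p i : ℤ)) (P i)).prod) W.vac}

/-- The set of states generated from a set `G` of strong generators. -/
def NKSusyVA.genSet (W : NKSusyVA 𝕜 N V) (G : Finset V) : Set V :=
  {x : V | ∃ (r : ℕ) (a : Fin r → V) (p : Fin r → ℕ) (P : Fin r → Finset (Fin N)),
    (∀ i, a i ∈ G ∧ 1 ≤ p i) ∧
    x = ((List.ofFn fun i => W.mode (a i) (-(p i : ℤ)) (P i)).prod) W.vac}

/-- Monomials in a set `G` of generators, with respect to the product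
`a ⋅ m = a_(-1|[N]) m` (lifting products of the classes `ā` in `R_V = V/C₂(V)`). -/
inductive NWMon (W : NWSusyVA 𝕜 N V) (G : Finset V) : V → Prop
  | vac : NWMon W G W.vac
  | step (g : V) (hg : g ∈ G) (m : V) (hm : NWMon W G m) :
      NWMon W G (W.mode g (-1) Finset.univ m)

/-- Monomials in a set `G` of generators, with respect to the product
`a ⋅ m = a_(-1|[N]) m`. -/
inductive NKMon (W : NKSusyVA 𝕜 N V) (G : Finset V) : V → Prop
  | vac : NKMon W G W.vac
  | step (g : V) (hg : g ∈ G) (m : V) (hm : NKMon W G m) :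
      NKMon W G (W.mode g (-1) Finset.univ m)

end Defs
section ModDefs

variable {𝕜 : Type} [Field 𝕜] [CharZero 𝕜] {N : ℕ}
variable {V : Type} [AddCommGroup V] [Module 𝕜 V]
variable {M : Type} [AddCommGroup M] [Module 𝕜 M]

/-- The Li filtration of a module over an `N_W = N` SUSY vertex algebra. -/
def NWModule.liFil {W : NWSusyVA 𝕜 N V} (Ms : NWModule 𝕜 N V M W) (n : ℤ) :
    Submodule 𝕜 M :=
  Submodule.span 𝕜 {x : M | ∃ (r : ℕ) (a : Fin (r + 1) → V) (k : Fin (r + 1) → ℕ)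
      (K : Fin (r + 1) → Finset (Fin N)) (m : M),
      n ≤ ∑ i, (k i : ℤ) ∧
      x = ((List.ofFn fun i => Ms.amode (a i) (-1 - (k i : ℤ)) (K i)).prod) m}

/-- The Li filtration of a module over an `N_K = N` SUSY vertex algebra. -/
def NKModule.liFil {W : NKSusyVA 𝕜 N V} (Ms : NKModule 𝕜 N V M W) (n : ℤ) :
    Submodule 𝕜 M :=
  Submodule.span 𝕜 {x : M | ∃ (r : ℕ) (a : Fin (r + 1) → V) (k : Fin (r + 1) → ℕ)
      (K : Fin (r + 1) → Finset (Fin N)) (m : M),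
      n ≤ ∑ i, (k i : ℤ) ∧
      x = ((List.ofFn fun i => Ms.amode (a i) (-1 - (k i : ℤ)) (K i)).prod) m}

/-- `C₂(M) = span{ a_(-j|J) m : j ≥ 2 }`. -/
def NWModule.C2M {W : NWSusyVA 𝕜 N V} (Ms : NWModule 𝕜 N V M W) : Submodule 𝕜 M :=
  Submodule.span 𝕜 {x : M | ∃ (a : V) (j : ℕ) (J : Finset (Fin N)) (m : M),
    2 ≤ j ∧ x = Ms.amode a (-(j : ℤ)) J m}

/-- `C₂(M) = span{ a_(-j|J) m : j ≥ 2 }`. -/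
def NKModule.C2M {W : NKSusyVA 𝕜 N V} (Ms : NKModule 𝕜 N V M W) : Submodule 𝕜 M :=
  Submodule.span 𝕜 {x : M | ∃ (a : V) (j : ℕ) (J : Finset (Fin N)) (m : M),
    2 ≤ j ∧ x = Ms.amode a (-(j : ℤ)) J m}

end ModDefs
section Structures2
variable (𝕜 : Type) [Field 𝕜] [CharZero 𝕜] (N : ℕ)
variable (V : Type) [AddCommGroup V] [Module 𝕜 V]
/-- An `N_W = N` SUSY vertex Lie algebra: the data of the nonnegative Fourier modes
`a_(j|J)` (`j ≥ 0`) of a "singular part" state-superfield correspondence `Y₋`,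
satisfying translation invariance, skew-symmetry (in the expanded mode form
involving `e^{Z∇}` with `Z∇ = zT + ∑ ζ^i S^i`) and the supercommutator axiom
(in the equivalent mode form of the SUSY commutator formula). -/
structure NWSusyVLA : Type where
  gr : ZMod 2 → Submodule 𝕜 V
  decomp : DirectSum.Decomposition gr
  T : Module.End 𝕜 V
  S : Fin N → Module.End 𝕜 V
  lmode : V →ₗ[𝕜] ℕ → Finset (Fin N) → Module.End 𝕜 V
  lmode_trunc : ∀ (a v : V), ∃ n : ℕ, ∀ j : ℕ, n ≤ j → ∀ J, lmode a j J v = 0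
  T_even : ∀ (p : ZMod 2), ∀ x ∈ gr p, T x ∈ gr p
  S_odd : ∀ (i : Fin N) (p : ZMod 2), ∀ x ∈ gr p, S i x ∈ gr (p + 1)
  lmode_parity : ∀ (pa pv : ZMod 2) (a v : V) (j : ℕ) (J : Finset (Fin N)),
    a ∈ gr pa → v ∈ gr pv →
    lmode a j J v ∈ gr (pa + pv + (N : ZMod 2) + (J.card : ZMod 2))
  transl_T : ∀ (a : V) (j : ℕ) (J : Finset (Fin N)),
    lmode (T a) j J = (-(j : ℤ)) • lmode a (j - 1) J
  transl_S : ∀ (i : Fin N) (a : V) (j : ℕ) (J : Finset (Fin N)),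
    lmode (S i a) j J = ssgn {i} (Finset.univ \ J) • lmode a j (J.erase i)
  skew : ∀ (pa pb : ZMod 2) (a b : V), a ∈ gr pa → b ∈ gr pb →
    ∀ (j : ℕ) (J : Finset (Fin N)),
    lmode a j J b
      = ((sg (pa * pb) : ℤ) : 𝕜) •
          ∑ᶠ l : ℕ, ∑ L ∈ (Finset.univ \ J).powerset,
            (((sg (((L.card.choose 2 : ℕ) : ZMod 2) + 1 + (j : ZMod 2) + (l : ZMod 2)
                   + (N : ZMod 2) + ((J ∪ L).card : ZMod 2)
                   + (L.card : ZMod 2) * ((N : ZMod 2) + ((J ∪ L).card : ZMod 2)))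
                * ssgn L ((Finset.univ \ J) \ L) : ℤ) : 𝕜)
              * (l.factorial : 𝕜)⁻¹) •
            ((T ^ l * sProd S L) (lmode b (j + l) (J ∪ L) a))
  commutator : ∀ (pa pb : ZMod 2) (a b : V), a ∈ gr pa → b ∈ gr pb →
    ∀ (l m : ℕ) (L M' : Finset (Fin N)) (v : V),
    lmode a l L (lmode b m M' v)
        - sg ((pa + (N : ZMod 2) + (L.card : ZMod 2)) *
              (pb + (N : ZMod 2) + (M'.card : ZMod 2))) •
            lmode b m M' (lmode a l L v)
      = ∑ j ∈ Finset.range (l + 1), ∑ J : Finset (Fin N),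
          if L ∩ M' ⊆ J then
            (((sg ((pa + (N : ZMod 2) + (L.card : ZMod 2)) *
                     ((N : ZMod 2) + (M'.card : ZMod 2))
                   + ((L.card : ZMod 2) + (J.card : ZMod 2)) *
                     ((N : ZMod 2) + (J.card : ZMod 2)))
                * (ssgn J (Finset.univ \ J) * ssgn L (Finset.univ \ L) * ssgn J (L \ J)
                    * ssgn (L \ J) ((Finset.univ \ M') \ (L \ J))) : ℤ) : 𝕜)
              * (l.choose j : 𝕜)) •
            lmode (lmode a j J b) (l + m - j) (M' ∪ (L \ J)) v
          else 0

/-- An `N_K = N` SUSY vertex Lie algebra. -/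
structure NKSusyVLA : Type where
  gr : ZMod 2 → Submodule 𝕜 V
  decomp : DirectSum.Decomposition gr
  SK : Fin N → Module.End 𝕜 V
  T : Module.End 𝕜 V
  T_sq : ∀ i : Fin N, SK i * SK i = T
  lmode : V →ₗ[𝕜] ℕ → Finset (Fin N) → Module.End 𝕜 V
  lmode_trunc : ∀ (a v : V), ∃ n : ℕ, ∀ j : ℕ, n ≤ j → ∀ J, lmode a j J v = 0
  SK_odd : ∀ (i : Fin N) (p : ZMod 2), ∀ x ∈ gr p, SK i x ∈ gr (p + 1)
  lmode_parity : ∀ (pa pv : ZMod 2) (a v : V) (j : ℕ) (J : Finset (Fin N)),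
    a ∈ gr pa → v ∈ gr pv →
    lmode a j J v ∈ gr (pa + pv + (N : ZMod 2) + (J.card : ZMod 2))
  transl_SK : ∀ (i : Fin N) (a : V) (j : ℕ) (J : Finset (Fin N)),
    lmode (SK i a) j J
      = if i ∈ J then ssgn (Finset.univ \ J) {i} • lmode a j (J.erase i)
        else (-(j : ℤ) * ssgn (Finset.univ \ insert i J) {i}) • lmode a (j - 1) (insert i J)
  skew : ∀ (pa pb : ZMod 2) (a b : V), a ∈ gr pa → b ∈ gr pb →
    ∀ (j : ℕ) (J : Finset (Fin N)),
    lmode a j J b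
      = ((sg (pa * pb) : ℤ) : 𝕜) •
          ∑ᶠ l : ℕ, ∑ L ∈ (Finset.univ \ J).powerset,
            (((sg (((L.card.choose 2 : ℕ) : ZMod 2) + 1 + (j : ZMod 2) + (l : ZMod 2)
                   + (N : ZMod 2) + ((J ∪ L).card : ZMod 2)
                   + (L.card : ZMod 2) * ((N : ZMod 2) + ((J ∪ L).card : ZMod 2)))
                * ssgn L ((Finset.univ \ J) \ L) : ℤ) : 𝕜)
              * (l.factorial : 𝕜)⁻¹) •
            ((T ^ l * sProd SK L) (lmode b (j + l) (J ∪ L) a))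
  commutator : ∀ (pa pb : ZMod 2) (a b : V), a ∈ gr pa → b ∈ gr pb →
    ∀ (l m : ℕ) (L M' : Finset (Fin N)) (v : V),
    lmode a l L (lmode b m M' v)
        - sg ((pa + (N : ZMod 2) + (L.card : ZMod 2)) *
              (pb + (N : ZMod 2) + (M'.card : ZMod 2))) •
            lmode b m M' (lmode a l L v)
      = ∑ j ∈ Finset.range (l + 1), ∑ J : Finset (Fin N),
          if M' ∩ ((J \ L) ∪ (L \ J)) = ∅ then
            (((sg ((pa + (N : ZMod 2) + (L.card : ZMod 2)) *
                     ((N : ZMod 2) + (M'.card : ZMod 2))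
                   + (J.card : ZMod 2) * ((N : ZMod 2) + (L.card : ZMod 2))
                   + (L.card : ZMod 2) * (N : ZMod 2)
                   + (((J ∩ L).card.choose 2 : ℕ) : ZMod 2)
                   + (((J.card + 1).choose 2 : ℕ) : ZMod 2))
                * (ssgn ((J \ L) ∪ (L \ J))
                      (Finset.univ \ (M' ∪ (J \ L) ∪ (L \ J)))
                    * ssgn J (Finset.univ \ J) * ssgn L (Finset.univ \ L)
                    * ssgn (J \ L) (J ∩ L) * ssgn (J ∩ L) (L \ J)
                    * ssgn (J \ L) (L \ J)) : ℤ) : 𝕜)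
              * ((∏ i ∈ Finset.range (j + (J \ L).card), ((l : 𝕜) - (i : 𝕜)))
                  / (j.factorial : 𝕜))) •
            lmode (lmode a j J b) (l + m - j - (J \ L).card) (M' ∪ (J \ L) ∪ (L \ J)) v
          else 0

/-- An `N_W = N` SUSY vertex Poisson algebra: a commutative `N_W = N` SUSY vertex
algebra together with an `N_W = N` SUSY vertex Lie algebra structure with the same
grading and operators `T`, `S^i`, such that the vertex Lie modes act as
super-derivations of the commutative product `b ⋅ c = b_(-1|[N]) c`. -/
structure NWSusyVPA : Type where
  toVA : NWSusyVA 𝕜 N V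
  commVA : toVA.IsCommutative
  toVLA : NWSusyVLA 𝕜 N V
  gr_eq : toVLA.gr = toVA.gr
  T_eq : toVLA.T = toVA.T
  S_eq : toVLA.S = toVA.S
  leibniz : ∀ (pa pb : ZMod 2) (a b : V), a ∈ toVA.gr pa → b ∈ toVA.gr pb →
    ∀ (j : ℕ) (J : Finset (Fin N)) (c : V),
      toVLA.lmode a j J (toVA.mode b (-1) Finset.univ c)
        = toVA.mode (toVLA.lmode a j J b) (-1) Finset.univ c
          + sg ((pa + (J.card : ZMod 2)) * pb) •
              toVA.mode b (-1) Finset.univ (toVLA.lmode a j J c)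

/-- An `N_K = N` SUSY vertex Poisson algebra. -/
structure NKSusyVPA : Type where
  toVA : NKSusyVA 𝕜 N V
  commVA : toVA.IsCommutative
  toVLA : NKSusyVLA 𝕜 N V
  gr_eq : toVLA.gr = toVA.gr
  SK_eq : toVLA.SK = toVA.SK
  leibniz : ∀ (pa pb : ZMod 2) (a b : V), a ∈ toVA.gr pa → b ∈ toVA.gr pb →
    ∀ (j : ℕ) (J : Finset (Fin N)) (c : V),
      toVLA.lmode a j J (toVA.mode b (-1) Finset.univ c)
        = toVA.mode (toVLA.lmode a j J b) (-1) Finset.univ c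
          + sg ((pa + (J.card : ZMod 2)) * pb) •
              toVA.mode b (-1) Finset.univ (toVLA.lmode a j J c)
end Structures2


section LiFilProof

variable {𝕜 : Type} [Field 𝕜] [CharZero 𝕜] {N : ℕ}
variable {V : Type} [AddCommGroup V] [Module 𝕜 V]
variable {M : Type} [AddCommGroup M] [Module 𝕜 M]
variable {W : NKSusyVA 𝕜 N V} (Ms : NKModule 𝕜 N V M W)

private lemma finsum_mem_sub (P : Submodule 𝕜 M) (f : ℕ → M) (h : ∀ i, f i ∈ P) :
    ∑ᶠ i, f i ∈ P := by
  by_cases hf : (Function.support f).Finite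
  · rw [finsum_eq_sum f hf]
    exact Submodule.sum_mem _ fun i _ => h i
  · rw [finsum_of_infinite_support hf]
    exact Submodule.zero_mem _

private lemma liFil_antitone {m n : ℤ} (h : m ≤ n) : Ms.liFil n ≤ Ms.liFil m :=
  Submodule.span_mono fun x hx => by
    obtain ⟨r, a, k, K, mm, hs, he⟩ := hx
    exact ⟨r, a, k, K, mm, h.trans hs, he⟩

private lemma liFil_top {n : ℤ} (h : n ≤ 0) : Ms.liFil n = ⊤ := by
  rw [eq_top_iff]
  intro x _
  apply Submodule.subset_span
  refine ⟨0, fun _ => W.vac, fun _ => 0, fun _ => Finset.univ, x, by simpa using h, ?_⟩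
  simp [List.ofFn_succ, Ms.vac_act]

private lemma prod_succ_apply {r : ℕ} (F : Fin (r + 2) → Module.End 𝕜 M) (m : M) :
    (List.ofFn F).prod m = F 0 ((List.ofFn fun i => F i.succ).prod m) := by
  rw [List.ofFn_succ, List.prod_cons]
  rfl

private lemma amode_mem_liFil (a : V) (k : ℕ) (K : Finset (Fin N)) {n : ℤ} {x : M}
    (hx : x ∈ Ms.liFil n) : Ms.amode a (-1 - (k : ℤ)) K x ∈ Ms.liFil (n + k) := by
  induction hx using Submodule.span_induction with
  | mem x hxs =>
    obtain ⟨r, b, l, L, mm, hs, rfl⟩ := hxs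
    apply Submodule.subset_span
    refine ⟨r + 1, Fin.cons a b, Fin.cons k l, Fin.cons K L, mm, ?_, ?_⟩
    · rw [Fin.sum_univ_succ]
      simp only [Fin.cons_zero, Fin.cons_succ]
      omega
    · rw [prod_succ_apply]
      simp [Fin.cons_zero, Fin.cons_succ]
  | zero => simpa using Submodule.zero_mem _
  | add x y hx hy ihx ihy => rw [map_add]; exact Submodule.add_mem _ ihx ihy
  | smul t x hx ih => rw [map_smul]; exact Submodule.smul_mem _ t ih

private def fourSpan (n : ℤ) : Submodule 𝕜 M :=
  Submodule.span 𝕜 {x : M | ∃ (a : V) (k : ℕ) (K : Finset (Fin N)) (m : M),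
    1 ≤ k ∧ m ∈ Ms.liFil (n - k) ∧ x = Ms.amode a (-1 - (k : ℤ)) K m}

private lemma grDecomp (W' : NKSusyVA 𝕜 N V) (a : V) :
    ∃ a0 a1 : V, a0 ∈ W'.gr 0 ∧ a1 ∈ W'.gr 1 ∧ a = a0 + a1 := by
  letI := W'.decomp
  have h1 : (⨆ p : ZMod 2, W'.gr p) = ⊤ :=
    (DirectSum.Decomposition.isInternal W'.gr).submodule_iSup_eq_top
  have h2 : (⨆ p : ZMod 2, W'.gr p) ≤ W'.gr 0 ⊔ W'.gr 1 := by
    apply iSup_le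
    intro p
    fin_cases p
    · exact le_sup_left
    · exact le_sup_right
  have h3 : a ∈ W'.gr 0 ⊔ W'.gr 1 := h2 (h1 ▸ Submodule.mem_top)
  obtain ⟨x, hx, y, hy, hxy⟩ := Submodule.mem_sup.mp h3
  exact ⟨x, y, hx, hy, hxy.symm⟩

private lemma key_homog (n : ℤ) (pa pc : ZMod 2) (a c : V) (ha : a ∈ W.gr pa)
    (hc : c ∈ W.gr pc) (K L : Finset (Fin N)) (k : ℕ) (hk : 1 ≤ k) (m' : M)
    (hm' : m' ∈ Ms.liFil (n - k)) :
    Ms.amode a (-1) K (Ms.amode c (-1 - (k : ℤ)) L m') ∈ fourSpan Ms n := by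
  have H := Ms.comm_formula pa pc a c ha hc (-1) (-1 - (k : ℤ)) K L m'
  rw [eq_add_of_sub_eq H]
  refine Submodule.add_mem _ ?_ ?_
  · apply finsum_mem_sub
    intro j
    apply Submodule.sum_mem
    intro J _
    split_ifs with hJ
    · apply Submodule.smul_mem
      apply Submodule.subset_span
      refine ⟨W.mode a (j : ℤ) J c, k + 1 + j + (J \ K).card,
        L ∪ (J \ K) ∪ (K \ J), m', by omega, ?_, ?_⟩
      · exact liFil_antitone Ms (by push_cast; omega) hm'
      · have he : (-1 : ℤ) + (-1 - (k : ℤ)) - (j : ℤ) - ((J \ K).card : ℤ)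
            = -1 - ((k + 1 + j + (J \ K).card : ℕ) : ℤ) := by push_cast; ring
        rw [he]
    · exact Submodule.zero_mem _
  · apply zsmul_mem
    apply Submodule.subset_span
    have h2 : Ms.amode a (-1) K m' ∈ Ms.liFil (n - k) := by
      have h3 := amode_mem_liFil Ms a 0 K hm'
      simpa using h3
    exact ⟨c, k, L, _, hk, h2, rfl⟩

private lemma key_a_homog (n : ℤ) (pa : ZMod 2) (a : V) (ha : a ∈ W.gr pa) (c : V)
    (K L : Finset (Fin N)) (k : ℕ) (hk : 1 ≤ k) (m' : M)
    (hm' : m' ∈ Ms.liFil (n - k)) :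
    Ms.amode a (-1) K (Ms.amode c (-1 - (k : ℤ)) L m') ∈ fourSpan Ms n := by
  obtain ⟨c0, c1, hc0, hc1, rfl⟩ := grDecomp W c
  simp only [map_add, Pi.add_apply, LinearMap.add_apply]
  exact Submodule.add_mem _ (key_homog Ms n pa 0 a c0 ha hc0 K L k hk m' hm')
    (key_homog Ms n pa 1 a c1 ha hc1 K L k hk m' hm')

private lemma key (n : ℤ) (a c : V) (K L : Finset (Fin N)) (k : ℕ) (hk : 1 ≤ k) (m' : M)
    (hm' : m' ∈ Ms.liFil (n - k)) :
    Ms.amode a (-1) K (Ms.amode c (-1 - (k : ℤ)) L m') ∈ fourSpan Ms n := by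
  obtain ⟨a0, a1, ha0, ha1, rfl⟩ := grDecomp W a
  simp only [map_add, Pi.add_apply, LinearMap.add_apply]
  exact Submodule.add_mem _ (key_a_homog Ms n 0 a0 ha0 c K L k hk m' hm')
    (key_a_homog Ms n 1 a1 ha1 c K L k hk m' hm')

private lemma amode_neg_one_fourSpan (n : ℤ) (a : V) (K : Finset (Fin N)) {x : M}
    (hx : x ∈ fourSpan Ms n) : Ms.amode a (-1) K x ∈ fourSpan Ms n := by
  induction hx using Submodule.span_induction with
  | mem x hxs =>
    obtain ⟨c, k, L, m', hk, hm', rfl⟩ := hxs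
    exact key Ms n a c K L k hk m' hm'
  | zero => simpa using Submodule.zero_mem _
  | add x y hx hy ihx ihy => rw [map_add]; exact Submodule.add_mem _ ihx ihy
  | smul t x hx ih => rw [map_smul]; exact Submodule.smul_mem _ t ih

private lemma prod_mem_fourSpan : ∀ (r : ℕ) (a : Fin (r + 1) → V) (k : Fin (r + 1) → ℕ)
    (K : Fin (r + 1) → Finset (Fin N)) (m : M) {n : ℤ}, 1 ≤ n → n ≤ ∑ i, (k i : ℤ) →
    ((List.ofFn fun i => Ms.amode (a i) (-1 - (k i : ℤ)) (K i)).prod) m ∈ fourSpan Ms n := by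
  intro r
  induction r with
  | zero =>
    intro a k K m n hn hs
    rw [Fin.sum_univ_one] at hs
    apply Submodule.subset_span
    refine ⟨a 0, k 0, K 0, m, by omega, ?_, ?_⟩
    · rw [liFil_top Ms (by omega)]; trivial
    · simp [List.ofFn_succ]
  | succ r ih =>
    intro a k K m n hn hs
    rw [Fin.sum_univ_succ] at hs
    rw [prod_succ_apply (fun i => Ms.amode (a i) (-1 - (k i : ℤ)) (K i)) m]
    by_cases h0 : k 0 = 0
    · have tail : ((List.ofFn fun i : Fin (r + 1) =>
          Ms.amode (a i.succ) (-1 - (k i.succ : ℤ)) (K i.succ)).prod) m ∈ fourSpan Ms n :=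
        ih _ _ _ m hn (by omega)
      have h4 := amode_neg_one_fourSpan Ms n (a 0) (K 0) tail
      simpa [h0] using h4
    · apply Submodule.subset_span
      refine ⟨a 0, k 0, K 0, _, by omega, ?_, rfl⟩
      apply Submodule.subset_span
      refine ⟨r, fun i => a i.succ, fun i => k i.succ, fun i => K i.succ, m, ?_, rfl⟩
      show n - (k 0 : ℤ) ≤ ∑ i : Fin (r + 1), ((k i.succ : ℕ) : ℤ)
      omega

private lemma part4 (n : ℤ) (hn : 1 ≤ n) : Ms.liFil n = fourSpan Ms n := by
  apply le_antisymm
  · show Submodule.span 𝕜 _ ≤ _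
    apply Submodule.span_le.mpr
    rintro x ⟨r, a, k, K, m, hs, rfl⟩
    exact prod_mem_fourSpan Ms r a k K m hn hs
  · show Submodule.span 𝕜 _ ≤ _
    apply Submodule.span_le.mpr
    rintro x ⟨a, k, K, m, hk, hm, rfl⟩
    have h1 := amode_mem_liFil Ms a k K hm
    have h2 : n - (k : ℤ) + k = n := by ring
    rwa [h2] at h1

private def fiveSet (n : ℤ) : Set M :=
  {x : M | ∃ (r : ℕ) (a : Fin (r + 1) → V) (k : Fin (r + 1) → ℕ)
      (K : Fin (r + 1) → Finset (Fin N)) (m : M),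
    (∀ i, 1 ≤ k i) ∧ n ≤ ∑ i, (k i : ℤ) ∧
    x = ((List.ofFn fun i => Ms.amode (a i) (-1 - (k i : ℤ)) (K i)).prod) m}

private lemma prepend5 {n : ℤ} (a : V) (k : ℕ) (hk : 1 ≤ k) (K : Finset (Fin N)) {x : M}
    (hx : x ∈ Submodule.span 𝕜 (fiveSet Ms (n - k))) :
    Ms.amode a (-1 - (k : ℤ)) K x ∈ Submodule.span 𝕜 (fiveSet Ms n) := by
  induction hx using Submodule.span_induction with
  | mem x hxs =>
    obtain ⟨r, b, l, L, m, hall, hs, rfl⟩ := hxs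
    apply Submodule.subset_span
    refine ⟨r + 1, Fin.cons a b, Fin.cons k l, Fin.cons K L, m, ?_, ?_, ?_⟩
    · intro i
      exact Fin.cases hk hall i
    · rw [Fin.sum_univ_succ]
      simp only [Fin.cons_zero, Fin.cons_succ]
      omega
    · conv_rhs => rw [prod_succ_apply]
      simp [Fin.cons_zero, Fin.cons_succ]
  | zero => simpa using Submodule.zero_mem _
  | add x y hx hy ihx ihy => rw [map_add]; exact Submodule.add_mem _ ihx ihy
  | smul t x hx ih => rw [map_smul]; exact Submodule.smul_mem _ t ih

private lemma part5main : ∀ t : ℕ, ∀ n : ℤ, 1 ≤ n → n ≤ (t : ℤ) →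
    Ms.liFil n ≤ Submodule.span 𝕜 (fiveSet Ms n) := by
  intro t
  induction t with
  | zero => intro n hn ht; exact absurd ht (by omega)
  | succ t ih =>
    intro n hn hnt
    rw [part4 Ms n hn]
    show Submodule.span 𝕜 _ ≤ _
    apply Submodule.span_le.mpr
    rintro x ⟨a, k, K, m, hk, hm, rfl⟩
    by_cases hc : n - (k : ℤ) ≤ 0
    · apply Submodule.subset_span
      refine ⟨0, fun _ => a, fun _ => k, fun _ => K, m, fun _ => hk, ?_, ?_⟩
      · show n ≤ ∑ _i : Fin 1, ((k : ℕ) : ℤ)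
        rw [Fin.sum_univ_one]; omega
      · simp [List.ofFn_succ]
    · exact prepend5 Ms a k hk K (ih (n - k) (by omega) (by omega) hm)

private lemma part5 (n : ℤ) (hn : 1 ≤ n) :
    Ms.liFil n = Submodule.span 𝕜 (fiveSet Ms n) := by
  apply le_antisymm
  · exact part5main Ms n.toNat n hn (by omega)
  · apply Submodule.span_le.mpr
    rintro x ⟨r, a, k, K, m, _, hs, he⟩
    exact Submodule.subset_span ⟨r, a, k, K, m, hs, he⟩

end LiFilProof

/-- **Basic properties of the Li filtration of a module, `N_K = N` case:**
(1) the filtration is decreasing; (2) `E n (M) = M` for `n ≤ 0`;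
(3) `a_(-1-k|K) E n (M) ⊆ E (n+k) (M)`; (4) for `n ≥ 1`, `E n (M)` is spanned by the
elements `a_(-1-k|K) m` with `k ≥ 1` and `m ∈ E (n-k) (M)`; (5) for `n ≥ 1`,
`E n (M)` is spanned by the elements `a¹_(-1-k₁|K₁) ⋯ a^r_(-1-k_r|K_r) m` with
`r ≥ 1`, all `k_i ≥ 1` and `k₁ + ⋯ + k_r ≥ n`. -/
theorem NK_liFil_basic
    (𝕜 : Type) [Field 𝕜] [CharZero 𝕜] (N : ℕ) (hN : 0 < N)
    (V : Type) [AddCommGroup V] [Module 𝕜 V]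
    (M : Type) [AddCommGroup M] [Module 𝕜 M]
    (W : NKSusyVA 𝕜 N V) (Ms : NKModule 𝕜 N V M W) :
    (∀ n : ℤ, Ms.liFil (n + 1) ≤ Ms.liFil n) ∧
    (∀ n : ℤ, n ≤ 0 → Ms.liFil n = ⊤) ∧
    (∀ (a : V) (k : ℕ) (K : Finset (Fin N)) (n : ℤ) (x : M),
      x ∈ Ms.liFil n → Ms.amode a (-1 - (k : ℤ)) K x ∈ Ms.liFil (n + k)) ∧
    (∀ n : ℤ, 1 ≤ n →
      Ms.liFil n = Submodule.span 𝕜 {x : M | ∃ (a : V) (k : ℕ) (K : Finset (Fin N)) (m : M),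
        1 ≤ k ∧ m ∈ Ms.liFil (n - k) ∧ x = Ms.amode a (-1 - (k : ℤ)) K m}) ∧
    (∀ n : ℤ, 1 ≤ n →
      Ms.liFil n = Submodule.span 𝕜 {x : M | ∃ (r : ℕ) (a : Fin (r + 1) → V)
          (k : Fin (r + 1) → ℕ) (K : Fin (r + 1) → Finset (Fin N)) (m : M),
        (∀ i, 1 ≤ k i) ∧ n ≤ ∑ i, (k i : ℤ) ∧
        x = ((List.ofFn fun i => Ms.amode (a i) (-1 - (k i : ℤ)) (K i)).prod) m}) := by
  refine ⟨fun n => liFil_antitone Ms (by omega), fun n hn => liFil_top Ms hn,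
    fun a k K n x hx => amode_mem_liFil Ms a k K hx,
    fun n hn => part4 Ms n hn, fun n hn => part5 Ms n hn⟩

end SUSY
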